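/- For any positive integer b and real λ > 0, the integral from 0 to 1 of λ * Pr[Pois(λ*t) < b] dt equals E[min(Pois(λ), b)]. -/

import Mathlib

open Real Finset

/-- Poisson pmf with rate `l`. -/
noncomputable def ppmf (l : ℝ) (k : ℕ) : ℝ := Real.exp (-l) * l ^ k / (Nat.factorial k)

/-- Expected value of `min(Pois(l), b)`. -/
noncomputable def truncMean (l : ℝ) (b : ℕ) : ℝ := ∑' k : ℕ, ppmf l k * (min k b : ℕ)

/-
Since `d/ds Pr[Pois(s) ≤ m] = -Pr[Pois(s) = m]`, the substitution `s = λ t` gives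
`∫₀¹ λ Pr[Pois(λ t) = m] dt = Pr[Pois(λ) > m]`. Summing over `m < b` yields
`∑_{m<b} Pr[Pois(λ) > m] = E[min(Pois(λ), b)]`.
-/

open MeasureTheory

noncomputable def poissonCdf (l : ℝ) (m : ℕ) : ℝ := ∑ j ∈ range (m + 1), ppmf l j

lemma HasSum.ite_lt {G : Type*} [AddCommGroup G] [TopologicalSpace G] [IsTopologicalAddGroup G]
    {f : ℕ → G} {a : G} (h : HasSum f a) (m : ℕ) :
    HasSum (fun k => if m < k then f k else 0) (a - ∑ i ∈ range (m + 1), f i) := by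
  have hhead : ∑ k ∈ range (m + 1), (if m < k then f k else 0) = 0 :=
    sum_eq_zero fun k hk => if_neg (by simpa [Nat.lt_succ_iff] using hk)
  have htail : HasSum (fun n => if m < n + (m + 1) then f (n + (m + 1)) else 0)
      (a - ∑ i ∈ range (m + 1), f i) := by
    simp only [show ∀ n, m < n + (m + 1) from fun n => by omega, if_true]
    exact (hasSum_nat_add_iff' (m + 1)).mpr h
  have := (hasSum_nat_add_iff (f := fun k => if m < k then f k else 0) (m + 1)).mp htail
  rwa [hhead, add_zero] at this

lemma continuous_ppmf (k : ℕ) : Continuous (ppmf · k) := by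
  unfold ppmf
  fun_prop

lemma hasDerivAt_ppmf_zero (t : ℝ) : HasDerivAt (ppmf · 0) (-ppmf t 0) t := by
  simpa [ppmf] using (hasDerivAt_neg t).exp

lemma hasDerivAt_ppmf_succ (j : ℕ) (t : ℝ) :
    HasDerivAt (ppmf · (j + 1)) (ppmf t j - ppmf t (j + 1)) t := by
  refine (((hasDerivAt_neg t).exp.mul (hasDerivAt_pow (j + 1) t)).div_const
    ((j + 1).factorial : ℝ)).congr_deriv ?_
  simp only [ppmf, Nat.factorial_succ, Nat.cast_mul]
  field_simp
  push_cast
  ring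

lemma hasDerivAt_poissonCdf (m : ℕ) (t : ℝ) :
    HasDerivAt (poissonCdf · m) (-ppmf t m) t := by
  induction m with
  | zero => simpa [poissonCdf] using hasDerivAt_ppmf_zero t
  | succ n ih =>
    simp only [poissonCdf, sum_range_succ _ (n + 1)] at ih ⊢
    exact (ih.add (hasDerivAt_ppmf_succ n t)).congr_deriv (by ring)

lemma poissonCdf_zero (m : ℕ) : poissonCdf 0 m = 1 := by
  rw [poissonCdf, sum_eq_single 0] <;> simp_all [ppmf]

lemma integral_ppmf (a b : ℝ) (m : ℕ) :
    ∫ s in a..b, ppmf s m = poissonCdf a m - poissonCdf b m := by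
  rw [intervalIntegral.integral_eq_sub_of_hasDerivAt (f := fun s => -poissonCdf s m)
    (fun t _ => by simpa using (hasDerivAt_poissonCdf m t).fun_neg)
    ((continuous_ppmf m).intervalIntegrable a b)]
  ring

lemma integral_zero_one_mul_ppmf_mul (l : ℝ) (m : ℕ) :
    ∫ t in (0 : ℝ)..1, l * ppmf (l * t) m = 1 - poissonCdf l m := by
  rw [intervalIntegral.integral_const_mul,
    intervalIntegral.mul_integral_comp_mul_left (f := (ppmf · m)), integral_ppmf, mul_zero,
    mul_one, poissonCdf_zero]

lemma hasSum_ppmf (l : ℝ) : HasSum (ppmf l) 1 := by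
  have h := (NormedSpace.expSeries_div_hasSum_exp l).mul_left (Real.exp (-l))
  rw [← Real.exp_eq_exp_ℝ, ← Real.exp_add, neg_add_cancel, Real.exp_zero] at h
  exact h.congr_fun fun k => mul_div_assoc _ _ _

lemma sum_range_ite_lt {R : Type*} [AddCommMonoidWithOne R] (b k : ℕ) :
    (∑ m ∈ range b, if m < k then (1 : R) else 0) = (min k b : ℕ) := by
  have h : (range b).filter (· < k) = range (min k b) := by
    ext m; simp only [mem_filter, mem_range]; omega
  rw [sum_boole, h, card_range]

lemma truncMean_eq_sum_one_sub_poissonCdf (l : ℝ) (b : ℕ) :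
    truncMean l b = ∑ m ∈ range b, (1 - poissonCdf l m) := by
  refine HasSum.tsum_eq ?_
  simp_rw [← sum_range_ite_lt, mul_sum, mul_ite, mul_one, mul_zero]
  exact hasSum_sum fun m _ => (hasSum_ppmf l).ite_lt m

theorem integral_eq_truncMean_general_general (b : ℕ) (lam : ℝ) :
    (∫ t in (0 : ℝ)..1, lam * ∑ k ∈ Finset.range b, ppmf (lam * t) k)
      = truncMean lam b := by
  have hint (k : ℕ) : IntervalIntegrable (fun t => lam * ppmf (lam * t) k) volume 0 1 :=
    ((continuous_ppmf k).comp (continuous_const_mul lam)).const_mul lam |>.intervalIntegrable 0 1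
  simp_rw [mul_sum]
  rw [intervalIntegral.integral_finsetSum fun k _ => hint k]
  simp_rw [integral_zero_one_mul_ppmf_mul, truncMean_eq_sum_one_sub_poissonCdf]

theorem integral_eq_truncMean_general (b : ℕ) (hb : 0 < b) (lam : ℝ) (hlam : 0 < lam) :
    (∫ t in (0 : ℝ)..1, lam * ∑ k ∈ Finset.range b, ppmf (lam * t) k)
      = truncMean lam b :=
  integral_eq_truncMean_general_general b lam
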